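/- arXiv:2211.12339 — 2 statements merged into one kernel-verified Lean document; each statement's English description precedes it below -/
import Mathlib

section
/- Let Cov be a symmetric positive definite n×n real matrix and fix i ∈ {1,...,n}. Then the minimum of θᵀ Cov θ over all θ ∈ ℝⁿ with θ_i = -1 equals det(Cov) / det(Cov with row i and column i removed). -/
/-! The minimiser is the `i`-th column of `Cov⁻¹`, rescaled so that its `i`-th entry is `-1`.
`Cov` maps it to a multiple of the `i`-th basis vector, so it is `Cov`-orthogonal to every
admissible direction (whose `i`-th entry is `0`), and the quadratic form splits as a sum of
its value `1 / (Cov⁻¹)ᵢᵢ` at the minimiser and a nonnegative term. Cramer's rule turns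
`(Cov⁻¹)ᵢᵢ` into the ratio of the principal minor to `det Cov`. -/

open Matrix

namespace Matrix

variable {ι R : Type*} [Fintype ι] [CommRing R]

theorem inv_apply_self_eq_det_submatrix_div_det {K : Type*} [Field K] {n : ℕ}
    (A : Matrix (Fin (n + 1)) (Fin (n + 1)) K) (i : Fin (n + 1)) :
    A⁻¹ i i = (A.submatrix i.succAbove i.succAbove).det / A.det := by
  simp [inv_def, adjugate_fin_succ_eq_det_submatrix, Ring.inverse_eq_inv, div_eq_inv_mul]

theorem IsSymm.dotProduct_mulVec_comm {A : Matrix ι ι R} (hA : A.IsSymm) (x y : ι → R) :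
    x ⬝ᵥ A *ᵥ y = y ⬝ᵥ A *ᵥ x := by
  rw [dotProduct_mulVec, dotProduct_comm, ← mulVec_transpose, hA.eq]

theorem IsSymm.dotProduct_mulVec_add_of_orthogonal {A : Matrix ι ι R} (hA : A.IsSymm)
    {x y : ι → R} (hxy : y ⬝ᵥ A *ᵥ x = 0) :
    (x + y) ⬝ᵥ A *ᵥ (x + y) = x ⬝ᵥ A *ᵥ x + y ⬝ᵥ A *ᵥ y := by
  have hyx : x ⬝ᵥ A *ᵥ y = 0 := by rw [hA.dotProduct_mulVec_comm, hxy]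
  simp only [mulVec_add, dotProduct_add, add_dotProduct, hxy, hyx]
  ring

theorem PosDef.isLeast_dotProduct_mulVec_of_apply_eq_neg_one [DecidableEq ι] {A : Matrix ι ι ℝ}
    (hA : A.PosDef) (i : ι) :
    IsLeast {v : ℝ | ∃ θ : ι → ℝ, θ i = -1 ∧ v = θ ⬝ᵥ A *ᵥ θ} (A⁻¹ i i)⁻¹ := by
  set c := A⁻¹ i i
  have hc : c ≠ 0 := hA.inv.diag_pos.ne'
  set θ₀ : ι → ℝ := -c⁻¹ • A⁻¹ *ᵥ Pi.single i 1
  have hθ₀i : θ₀ i = -1 := by simp [θ₀, mulVec_single, c, hc]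
  have hAθ₀ : A *ᵥ θ₀ = -c⁻¹ • Pi.single i 1 := by
    rw [mulVec_smul, mulVec_mulVec, mul_nonsing_inv _ (hA.isUnit.map detMonoidHom), one_mulVec]
  have hθ₀ : θ₀ ⬝ᵥ A *ᵥ θ₀ = c⁻¹ := by simp [hAθ₀, dotProduct_single, hθ₀i]
  refine ⟨⟨θ₀, hθ₀i, hθ₀.symm⟩, ?_⟩
  rintro v ⟨θ, hθi, rfl⟩
  have horth : (θ - θ₀) ⬝ᵥ A *ᵥ θ₀ = 0 := by simp [hAθ₀, dotProduct_single, hθi, hθ₀i]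
  have hsymm : A.IsSymm := isHermitian_iff_isSymm.mp hA.isHermitian
  calc c⁻¹ ≤ θ₀ ⬝ᵥ A *ᵥ θ₀ + (θ - θ₀) ⬝ᵥ A *ᵥ (θ - θ₀) :=
        hθ₀ ▸ le_add_of_nonneg_right (hA.posSemidef.dotProduct_mulVec_nonneg _)
    _ = θ ⬝ᵥ A *ᵥ θ := by rw [← hsymm.dotProduct_mulVec_add_of_orthogonal horth, add_sub_cancel]

end Matrix

/-- For a symmetric positive definite `Cov`, the minimum of `θᵀ Cov θ`
over `θ` with `θ i = -1` equals `det Cov / det (Cov with row i and column i removed)`. -/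
theorem stmt_1 {n : ℕ} (Cov : Matrix (Fin (n + 1)) (Fin (n + 1)) ℝ)
    (hCov : Cov.PosDef) (i : Fin (n + 1)) :
    IsLeast {v : ℝ | ∃ θ : Fin (n + 1) → ℝ, θ i = -1 ∧ v = θ ⬝ᵥ Cov.mulVec θ}
      (Cov.det / (Cov.submatrix i.succAbove i.succAbove).det) := by
  rw [← inv_div, ← inv_apply_self_eq_det_submatrix_div_det]
  exact hCov.isLeast_dotProduct_mulVec_of_apply_eq_neg_one i
end

section
/- Let Ĉov = A² where A is symmetric positive definite, b̂ ∈ ℝ^{n-1}, and for λ > 0 let θ̂*(λ) minimize θ̂ᵀ Ĉov θ̂ - 2b̂ᵀθ̂ + λ‖θ̂‖₁. Define ξ*(λ) = (√2 A⁻¹ b̂ - √2 A θ̂*(λ))/λ. Then for all λ', λ'' > 0 and each coordinate j: |(Ĉov θ̂*(λ') - b̂)_j / λ' - (Ĉov θ̂*(λ'') - b̂)_j / λ''| ≤ ‖A_j‖₂ · ‖A⁻¹ b̂‖₂ · |1/λ' - 1/λ''|, where A_j is the j-th row of A. -/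
/-!
With `u = A⁻¹ b̂`, the Lasso objective at `λ • φ` equals `λ² (‖Aφ - u/λ‖² + ‖φ‖₁) - ‖u‖²`,
so `θ̂*(λ)/λ` minimizes a penalized least-squares problem with data `u/λ` and penalty `‖·‖₁`.
For such a problem the residual `Aφ - v` is a nonexpansive function of the data `v`: adding the
first-order optimality inequalities at two data points cancels the penalty terms. Finally
`(Ĉov θ̂*(λ) - b̂)/λ` is `A` applied to that residual, and Cauchy–Schwarz against the row `A_j`,
together with `‖u/λ' - u/λ''‖ = ‖u‖ |1/λ' - 1/λ''|`, gives the bound.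
-/

open Matrix Finset Set Filter Topology

theorem nonneg_of_forall_mem_Ioc_nonneg_add_mul {a c : ℝ}
    (h : ∀ t ∈ Ioc (0 : ℝ) 1, 0 ≤ a + t * c) : 0 ≤ a := by
  have hlim : Tendsto (fun t : ℝ => a + t * c) (𝓝[>] 0) (𝓝 a) := by
    have hcont : Continuous fun t : ℝ => a + t * c := by fun_prop
    simpa using (hcont.tendsto 0).mono_left nhdsWithin_le_nhds
  exact ge_of_tendsto hlim (eventually_of_mem (Ioc_mem_nhdsGT one_pos) h)

section PenalizedLeastSquares

variable {E F : Type*} [AddCommGroup E] [Module ℝ E] [NormedAddCommGroup F]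
  [InnerProductSpace ℝ F]

def penalizedLeastSquares (T : E →ₗ[ℝ] F) (R : E → ℝ) (v : F) (x : E) : ℝ :=
  ‖T x - v‖ ^ 2 + R x

variable {T : E →ₗ[ℝ] F} {R : E → ℝ}

theorem IsMinOn.inner_residual_add_penalty_nonneg (hR : ConvexOn ℝ univ R) {v : F} {x : E}
    (hx : IsMinOn (penalizedLeastSquares T R v) univ x) (y : E) :
    0 ≤ 2 * inner ℝ (T x - v) (T y - T x) + (R y - R x) := by
  refine nonneg_of_forall_mem_Ioc_nonneg_add_mul (c := ‖T y - T x‖ ^ 2) fun t ⟨ht₀, ht₁⟩ => ?_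
  have hmin := isMinOn_univ_iff.mp hx (x + t • (y - x))
  have hconv : R (x + t • (y - x)) ≤ (1 - t) * R x + t * R y := by
    rw [show x + t • (y - x) = (1 - t) • x + t • y by module]
    exact hR.2 (mem_univ x) (mem_univ y) (sub_nonneg.2 ht₁) ht₀.le (sub_add_cancel 1 t)
  have hexp : T (x + t • (y - x)) - v = (T x - v) + t • (T y - T x) := by
    rw [map_add, map_smul, map_sub]; abel
  simp only [penalizedLeastSquares, hexp, norm_add_sq_real, real_inner_smul_right,
    norm_smul, Real.norm_eq_abs, abs_of_pos ht₀] at hmin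
  nlinarith

theorem norm_residual_sub_le_of_isMinOn (hR : ConvexOn ℝ univ R) {v w : F} {x y : E}
    (hx : IsMinOn (penalizedLeastSquares T R v) univ x)
    (hy : IsMinOn (penalizedLeastSquares T R w) univ y) :
    ‖(T x - v) - (T y - w)‖ ≤ ‖v - w‖ := by
  have hxy := hx.inner_residual_add_penalty_nonneg hR y
  have hyx := hy.inner_residual_add_penalty_nonneg hR x
  set r := (T x - v) - (T y - w)
  set p := T x - T y
  have hmono : inner ℝ p r ≤ 0 := by
    have : inner ℝ p r = -(inner ℝ (T x - v) (T y - T x) + inner ℝ (T y - w) p) := by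
      rw [real_inner_comm, inner_sub_left, ← neg_sub (T x) (T y), inner_neg_right]; ring
    linarith
  refine (sq_le_sq₀ (norm_nonneg _) (norm_nonneg _)).mp ?_
  calc ‖r‖ ^ 2 ≤ ‖p‖ ^ 2 - 2 * inner ℝ p r + ‖r‖ ^ 2 := by linarith [sq_nonneg ‖p‖]
    _ = ‖v - w‖ ^ 2 := by rw [← norm_sub_sq_real]; congr 2; simp only [p, r]; abel

end PenalizedLeastSquares

section Lasso

variable {n : Type*} [Fintype n]

theorem EuclideanSpace.norm_toLp_sq (x : n → ℝ) : ‖WithLp.toLp 2 x‖ ^ 2 = x ⬝ᵥ x := by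
  rw [← real_inner_self_eq_norm_sq, EuclideanSpace.inner_toLp_toLp, star_trivial]

theorem Matrix.IsSymm.dotProduct_mulVec_comm_s10 {α : Type*} [CommSemiring α] {A : Matrix n n α}
    (hA : A.IsSymm) (v w : n → α) :
    v ⬝ᵥ A *ᵥ w = A *ᵥ v ⬝ᵥ w := by
  rw [dotProduct_mulVec, ← vecMul_transpose, hA.eq]

def Matrix.mulVecLinEuclidean {m : Type*} (A : Matrix m n ℝ) :
    (n → ℝ) →ₗ[ℝ] EuclideanSpace ℝ m :=
  (WithLp.linearEquiv 2 ℝ (m → ℝ)).symm.toLinearMap ∘ₗ A.mulVecLin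

@[simp]
theorem Matrix.mulVecLinEuclidean_apply {m : Type*} (A : Matrix m n ℝ) (θ : n → ℝ) :
    A.mulVecLinEuclidean θ = WithLp.toLp 2 (A *ᵥ θ) := rfl

def lassoObjective (C : Matrix n n ℝ) (b : n → ℝ) (lam : ℝ) (θ : n → ℝ) : ℝ :=
  θ ⬝ᵥ C *ᵥ θ - 2 * (b ⬝ᵥ θ) + lam * ∑ j, |θ j|

theorem lassoObjective_mul_self_smul {A : Matrix n n ℝ} (hA : A.IsSymm) {b u : n → ℝ}
    (hu : A *ᵥ u = b) {lam : ℝ} (hlam : 0 < lam) (φ : n → ℝ) :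
    lassoObjective (A * A) b lam (lam • φ) =
      lam ^ 2 * penalizedLeastSquares A.mulVecLinEuclidean (fun θ => ∑ j, |θ j|)
        (WithLp.toLp 2 (lam⁻¹ • u)) φ - u ⬝ᵥ u := by
  have hsym : A *ᵥ u ⬝ᵥ φ = A *ᵥ φ ⬝ᵥ u := by
    rw [← hA.dotProduct_mulVec_comm_s10, dotProduct_comm]
  simp only [lassoObjective, penalizedLeastSquares, mulVecLinEuclidean_apply, ← WithLp.toLp_sub,
    EuclideanSpace.norm_toLp_sq, ← mulVec_mulVec, hA.dotProduct_mulVec_comm_s10 _ (A *ᵥ _), ← hu,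
    hsym, mulVec_smul, Pi.smul_apply, smul_eq_mul, abs_mul,
    abs_of_pos hlam, ← mul_sum, dotProduct_sub, sub_dotProduct, dotProduct_smul, smul_dotProduct,
    dotProduct_comm u]
  field_simp
  ring

theorem convexOn_sum_abs : ConvexOn ℝ univ (fun θ : n → ℝ => ∑ j, |θ j|) := by
  simpa [Function.comp_def, PiLp.norm_eq_of_L1] using
    (convexOn_norm convex_univ).comp_linearMap (WithLp.linearEquiv 1 ℝ (n → ℝ)).symm.toLinearMap

theorem IsMinOn.penalizedLeastSquares_inv_smul {A : Matrix n n ℝ} (hA : A.IsSymm) {b u : n → ℝ}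
    (hu : A *ᵥ u = b) {lam : ℝ} (hlam : 0 < lam) {θ : n → ℝ}
    (hθ : IsMinOn (lassoObjective (A * A) b lam) univ θ) :
    IsMinOn (penalizedLeastSquares A.mulVecLinEuclidean (fun θ => ∑ j, |θ j|)
      (WithLp.toLp 2 (lam⁻¹ • u))) univ (lam⁻¹ • θ) := by
  refine isMinOn_univ_iff.2 fun φ => ?_
  have h := isMinOn_univ_iff.1 hθ (lam • φ)
  rw [← smul_inv_smul₀ hlam.ne' θ, lassoObjective_mul_self_smul hA hu hlam,
    lassoObjective_mul_self_smul hA hu hlam, sub_le_sub_iff_right] at h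
  exact le_of_mul_le_mul_left h (by positivity)

theorem mul_self_mulVec_sub_div_eq {A : Matrix n n ℝ} {b u : n → ℝ} (hu : A *ᵥ u = b)
    {lam : ℝ} (hlam : lam ≠ 0) (θ : n → ℝ) (j : n) :
    (((A * A) *ᵥ θ) j - b j) / lam =
      (A *ᵥ (A.mulVecLinEuclidean (lam⁻¹ • θ) - WithLp.toLp 2 (lam⁻¹ • u)).ofLp) j := by
  simp only [mulVecLinEuclidean_apply, ← WithLp.toLp_sub, mulVec_sub, mulVec_smul, mulVec_mulVec,
    hu, Pi.sub_apply, Pi.smul_apply, smul_eq_mul]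
  field_simp

theorem abs_mulVec_apply_le_sqrt_mul_norm {m : Type*} (A : Matrix m n ℝ)
    (x : EuclideanSpace ℝ n) (i : m) :
    |(A *ᵥ x.ofLp) i| ≤ √(∑ k, A i k ^ 2) * ‖x‖ := by
  calc |(A *ᵥ x.ofLp) i| = |inner ℝ (WithLp.toLp 2 (A i)) x| := by
        rw [← WithLp.toLp_ofLp (p := 2) x, EuclideanSpace.inner_toLp_toLp, star_trivial,
          dotProduct_comm]
        rfl
    _ ≤ ‖WithLp.toLp 2 (A i)‖ * ‖x‖ := abs_real_inner_le_norm _ _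
    _ = √(∑ k, A i k ^ 2) * ‖x‖ := by simp [EuclideanSpace.norm_eq]

end Lasso

/-- Slope bound for the Lasso solution path (Theorem 2 of the paper).
With `Ĉov = A²` (`A` symmetric positive definite) and `θ̂*(λ)` the minimizer of
`θ̂ᵀ Ĉov θ̂ - 2b̂ᵀθ̂ + λ‖θ̂‖₁`, for every coordinate `j`,
`|(Ĉov θ̂*(λ') - b̂)_j/λ' - (Ĉov θ̂*(λ'') - b̂)_j/λ''| ≤ ‖A_j‖₂ ‖A⁻¹ b̂‖₂ |1/λ' - 1/λ''|`. -/
theorem stmt_10 {m : ℕ} (A Cov : Matrix (Fin m) (Fin m) ℝ)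
    (hA : A.PosDef) (hACov : Cov = A * A)
    (b : Fin m → ℝ) (lam' lam'' : ℝ) (hlam' : 0 < lam') (hlam'' : 0 < lam'')
    (θ₁ θ₂ : Fin m → ℝ)
    (hθ₁ : ∀ θ : Fin m → ℝ,
      θ₁ ⬝ᵥ Cov.mulVec θ₁ - 2 * (b ⬝ᵥ θ₁) + lam' * ∑ j, |θ₁ j| ≤
        θ ⬝ᵥ Cov.mulVec θ - 2 * (b ⬝ᵥ θ) + lam' * ∑ j, |θ j|)
    (hθ₂ : ∀ θ : Fin m → ℝ,
      θ₂ ⬝ᵥ Cov.mulVec θ₂ - 2 * (b ⬝ᵥ θ₂) + lam'' * ∑ j, |θ₂ j| ≤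
        θ ⬝ᵥ Cov.mulVec θ - 2 * (b ⬝ᵥ θ) + lam'' * ∑ j, |θ j|)
    (j : Fin m) :
    |(Cov.mulVec θ₁ j - b j) / lam' - (Cov.mulVec θ₂ j - b j) / lam''| ≤
      Real.sqrt (∑ k, (A j k) ^ 2) * Real.sqrt (∑ k, (A⁻¹.mulVec b k) ^ 2) *
        |1 / lam' - 1 / lam''| := by
  subst hACov
  have hsym : A.IsSymm := isHermitian_iff_isSymm.mp hA.isHermitian
  set u := A⁻¹ *ᵥ b
  have hu : A *ᵥ u = b := by
    rw [mulVec_mulVec, mul_nonsing_inv A ((isUnit_iff_isUnit_det A).mp hA.isUnit), one_mulVec]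
  have h₁ := (isMinOn_univ_iff.2 hθ₁).penalizedLeastSquares_inv_smul hsym hu hlam'
  have h₂ := (isMinOn_univ_iff.2 hθ₂).penalizedLeastSquares_inv_smul hsym hu hlam''
  have hres := norm_residual_sub_le_of_isMinOn convexOn_sum_abs h₁ h₂
  rw [mul_self_mulVec_sub_div_eq hu hlam'.ne', mul_self_mulVec_sub_div_eq hu hlam''.ne',
    ← Pi.sub_apply, ← mulVec_sub, ← WithLp.ofLp_sub]
  have hnorm : ‖WithLp.toLp 2 (lam'⁻¹ • u) - WithLp.toLp 2 (lam''⁻¹ • u)‖ =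
      √(∑ k, u k ^ 2) * |1 / lam' - 1 / lam''| := by
    rw [← WithLp.toLp_sub, ← sub_smul, WithLp.toLp_smul, norm_smul, EuclideanSpace.norm_eq]
    simp [mul_comm]
  calc _ ≤ √(∑ k, A j k ^ 2) * ‖_‖ := abs_mulVec_apply_le_sqrt_mul_norm A _ j
    _ ≤ √(∑ k, A j k ^ 2) * (√(∑ k, u k ^ 2) * |1 / lam' - 1 / lam''|) := by
        rw [← hnorm]; gcongr
    _ = _ := by ring
end
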